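/- Let u : ℝ → ℝ be a bounded C³ solution of u'' = F'(u) for some C² function F. Then u' is bounded on ℝ and the infimum of |u'| over ℝ equals 0. -/

import Mathlib

/-!
Multiplying `u'' = F'(u)` by `u'` shows that the energy `(u')² - 2 F(u)` is constant; since `u`
takes values in a compact interval, `F(u)` is bounded and hence so is `u'`. The infimum of `|u'|`
vanishes for any differentiable `u` with `|u| ≤ M`: by the mean value theorem on `[0, b]` some
value of `u'` is at most `2 M / b` in absolute value, which is arbitrarily small.
-/

section Energy

variable {F u : ℝ → ℝ}

theorem hasDerivAt_energy (hF : Differentiable ℝ F) (hu : Differentiable ℝ u)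
    (hu' : Differentiable ℝ (deriv u)) (hode : ∀ x, deriv (deriv u) x = deriv F (u x)) (x : ℝ) :
    HasDerivAt (fun y => deriv u y ^ 2 - 2 * F (u y)) 0 x := by
  have hsq : HasDerivAt (fun y => deriv u y ^ 2) (2 * deriv u x * deriv (deriv u) x) x := by
    simpa [mul_comm] using (hu' x).hasDerivAt.fun_pow 2
  have hFu : HasDerivAt (fun y => F (u y)) (deriv F (u x) * deriv u x) x :=
    (hF (u x)).hasDerivAt.comp x (hu x).hasDerivAt
  refine (hsq.sub (hFu.const_mul 2)).congr_deriv ?_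
  rw [hode x]
  ring

theorem energy_eq (hF : Differentiable ℝ F) (hu : Differentiable ℝ u)
    (hu' : Differentiable ℝ (deriv u)) (hode : ∀ x, deriv (deriv u) x = deriv F (u x))
    (x y : ℝ) : deriv u x ^ 2 - 2 * F (u x) = deriv u y ^ 2 - 2 * F (u y) :=
  is_const_of_deriv_eq_zero (fun z => (hasDerivAt_energy hF hu hu' hode z).differentiableAt)
    (fun z => (hasDerivAt_energy hF hu hu' hode z).deriv) x y

theorem exists_abs_deriv_le_of_ode (hF : Differentiable ℝ F) (hu : Differentiable ℝ u)
    (hu' : Differentiable ℝ (deriv u)) (hode : ∀ x, deriv (deriv u) x = deriv F (u x))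
    {M : ℝ} (hM : ∀ x, |u x| ≤ M) : ∃ C, ∀ x, |deriv u x| ≤ C := by
  obtain ⟨K, hK⟩ := (isCompact_Icc (a := -M) (b := M)).exists_bound_of_continuousOn
    hF.continuous.continuousOn
  have hFu : ∀ x, |F (u x)| ≤ K := fun x => hK (u x) (abs_le.mp (hM x))
  refine ⟨√(deriv u 0 ^ 2 - 2 * F (u 0) + 2 * K), fun x => ?_⟩
  have hsq : deriv u x ^ 2 ≤ deriv u 0 ^ 2 - 2 * F (u 0) + 2 * K := by
    linarith [energy_eq hF hu hu' hode x 0, (abs_le.mp (hFu x)).2]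
  simpa only [Real.sqrt_sq_eq_abs] using Real.sqrt_le_sqrt hsq

end Energy

theorem exists_abs_deriv_lt_of_abs_le {f : ℝ → ℝ} (hf : Differentiable ℝ f) {M : ℝ}
    (hM : ∀ x, |f x| ≤ M) {ε : ℝ} (hε : 0 < ε) : ∃ c, |deriv f c| < ε := by
  have hM0 : 0 ≤ M := (abs_nonneg _).trans (hM 0)
  set b := (2 * M + 1) / ε
  have hb : 0 < b := by positivity
  obtain ⟨c, -, hc⟩ := exists_deriv_eq_slope f hb hf.continuous.continuousOn hf.differentiableOn
  refine ⟨c, ?_⟩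
  have hdiff : |f b - f 0| ≤ 2 * M := by
    linarith [abs_sub (f b) (f 0), abs_neg (f 0), hM b, hM 0]
  rw [hc, sub_zero, abs_div, abs_of_pos hb, div_lt_iff₀ hb]
  calc |f b - f 0| ≤ 2 * M := hdiff
    _ < 2 * M + 1 := by linarith
    _ = ε * b := (mul_div_cancel₀ _ hε.ne').symm

theorem iInf_abs_deriv_eq_zero_of_abs_le {f : ℝ → ℝ} (hf : Differentiable ℝ f) {M : ℝ}
    (hM : ∀ x, |f x| ≤ M) : ⨅ x, |deriv f x| = 0 :=
  ciInf_eq_of_forall_ge_of_forall_gt_exists_lt (fun _ => abs_nonneg _)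
    (fun _ hε => exists_abs_deriv_lt_of_abs_le hf hM hε)

theorem stmt_3 (F u : ℝ → ℝ) (hF : ContDiff ℝ 2 F) (hu : ContDiff ℝ 3 u)
    (hbdd : ∃ M : ℝ, ∀ x : ℝ, |u x| ≤ M)
    (hode : ∀ x : ℝ, deriv (deriv u) x = deriv F (u x)) :
    (∃ C : ℝ, ∀ x : ℝ, |deriv u x| ≤ C) ∧ (⨅ x : ℝ, |deriv u x|) = 0 := by
  obtain ⟨M, hM⟩ := hbdd
  have hu₁ : Differentiable ℝ u := hu.differentiable (by norm_num)
  have hu₂ : Differentiable ℝ (deriv u) :=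
    (hu.iterate_deriv' 2 1).differentiable (by norm_num)
  exact ⟨exists_abs_deriv_le_of_ode (hF.differentiable (by norm_num)) hu₁ hu₂ hode hM,
    iInf_abs_deriv_eq_zero_of_abs_le hu₁ hM⟩
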